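/- arXiv:2402.17947 — 6 statements merged into one kernel-verified Lean document; each statement's English description precedes it below -/
import Mathlib

section
/- Let (a_n) be a sequence in [0,1] and (c_n), (s_n) be sequences of nonnegative real numbers such that s_{n+1} ≤ (1 − a_n)·s_n + c_n for all n ∈ ℕ. Assume L ∈ ℕ, L ≥ 1, is an upper bound on (s_n), that θ : ℕ → ℕ is a rate of divergence of Σ_{n=0}^∞ a_n, and that χ : ℕ → ℕ is a Cauchy modulus of the series Σ_{n=0}^∞ c_n. Then s_n → 0 with rate of convergence Σ(k) = θ(χ(2k+1) + 1 + ⌈ln(2L(k+1))⌉) + 1, i.e. for all k ∈ ℕ and all n ≥ Σ(k), s_n ≤ 1/(k+1). -/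
/-!
Unrolling the recursion from `m = χ(2k+1) + 1` gives
`s n ≤ (∏_{m ≤ i < n} (1 - a i)) * s m + ∑_{m ≤ i < n} c i`.
The Cauchy modulus bounds the sum by `1 / (2(k+1))`. Since `1 - x ≤ exp (-x)`, the product is at
most `exp (-∑_{m ≤ i < n} a i)`, and `n > θ(m + M)` forces `∑_{m ≤ i < n} a i ≥ M`, where
`M = ⌈log (2L(k+1))⌉`; so the first term is at most `L / (2L(k+1))`.
-/

open Finset Real

def IsRateOfDivergence (a : ℕ → ℝ) (θ : ℕ → ℕ) : Prop :=
  ∀ n : ℕ, (n : ℝ) ≤ ∑ i ∈ range (θ n + 1), a i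

def IsCauchyModulus (c : ℕ → ℝ) (χ : ℕ → ℕ) : Prop :=
  ∀ k : ℕ, ∀ n, χ k ≤ n → ∀ p : ℕ, ∑ i ∈ Icc (n + 1) (n + p), c i ≤ 1 / (k + 1)

theorem sum_range_le_of_le_one {a : ℕ → ℝ} (ha : ∀ n, a n ≤ 1) (n : ℕ) :
    ∑ i ∈ range n, a i ≤ n := by
  simpa using sum_le_card_nsmul (range n) a 1 fun i _ => ha i

namespace IsRateOfDivergence

variable {a : ℕ → ℝ} {θ : ℕ → ℕ}

theorem le_add_one (hθ : IsRateOfDivergence a θ) (ha : ∀ n, a n ≤ 1) (n : ℕ) : n ≤ θ n + 1 := by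
  exact_mod_cast (hθ n).trans (sum_range_le_of_le_one ha _)

theorem le_sum_Ico (hθ : IsRateOfDivergence a θ) (ha : ∀ n, a n ∈ Set.Icc (0 : ℝ) 1)
    {m M n : ℕ} (hn : θ (m + M) + 1 ≤ n) : (M : ℝ) ≤ ∑ i ∈ Ico m n, a i := by
  have hmn : m ≤ n := by have := hθ.le_add_one (fun i => (ha i).2) (m + M); omega
  have hlarge : ((m + M : ℕ) : ℝ) ≤ ∑ i ∈ range n, a i :=
    (hθ _).trans <| sum_le_sum_of_subset_of_nonneg (range_subset_range.mpr hn)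
      fun i _ _ => (ha i).1
  have hsmall := sum_range_le_of_le_one (fun i => (ha i).2) m
  rw [sum_Ico_eq_sub _ hmn]
  push_cast at hlarge
  linarith

end IsRateOfDivergence

theorem IsCauchyModulus.sum_Ico_le {c : ℕ → ℝ} {χ : ℕ → ℕ} (hχ : IsCauchyModulus c χ)
    {k N n : ℕ} (hN : χ k ≤ N) (hn : N + 1 ≤ n) : ∑ i ∈ Ico (N + 1) n, c i ≤ 1 / (k + 1) := by
  have hIco : Ico (N + 1) n = Icc (N + 1) (N + (n - (N + 1))) := by
    rw [← Ico_add_one_right_eq_Icc]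
    congr 1
    omega
  rw [hIco]
  exact hχ k N hN _

theorem prod_one_sub_le_exp_neg_sum {ι : Type*} (s : Finset ι) {a : ι → ℝ}
    (ha : ∀ i ∈ s, a i ≤ 1) : ∏ i ∈ s, (1 - a i) ≤ exp (-∑ i ∈ s, a i) := by
  rw [← sum_neg_distrib, exp_sum]
  exact prod_le_prod (fun i hi => by linarith [ha i hi]) fun i _ => one_sub_le_exp_neg (a i)

theorem le_prod_mul_add_sum_of_le_one_sub_mul_add {a c s : ℕ → ℝ}
    (ha : ∀ n, a n ∈ Set.Icc (0 : ℝ) 1) (hc : ∀ n, 0 ≤ c n)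
    (hrec : ∀ n : ℕ, s (n + 1) ≤ (1 - a n) * s n + c n) {m n : ℕ} (hmn : m ≤ n) :
    s n ≤ (∏ i ∈ Ico m n, (1 - a i)) * s m + ∑ i ∈ Ico m n, c i := by
  induction n, hmn using Nat.le_induction with
  | base => simp
  | succ n hmn ih =>
    have hsum_nonneg : 0 ≤ ∑ i ∈ Ico m n, c i := sum_nonneg fun i _ => hc i
    have h₀ : 0 ≤ a n := (ha n).1
    have h₁ : 0 ≤ 1 - a n := sub_nonneg.mpr (ha n).2
    rw [prod_Ico_succ_top hmn, sum_Ico_succ_top hmn]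
    calc s (n + 1) ≤ (1 - a n) * s n + c n := hrec n
      _ ≤ (1 - a n) * ((∏ i ∈ Ico m n, (1 - a i)) * s m + ∑ i ∈ Ico m n, c i) + c n := by
        gcongr
      _ ≤ _ := by nlinarith

theorem le_exp_ceil_log (x : ℝ) : x ≤ exp ⌈log x⌉₊ :=
  (le_exp_log x).trans <| exp_le_exp.mpr (Nat.le_ceil _)

theorem stmt_4_general (a c s : ℕ → ℝ)
    (ha : ∀ n, a n ∈ Set.Icc (0 : ℝ) 1)
    (hc : ∀ n, 0 ≤ c n)
    (hrec : ∀ n : ℕ, s (n + 1) ≤ (1 - a n) * s n + c n)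
    (L : ℕ) (hLs : ∀ n, s n ≤ (L : ℝ))
    (θ : ℕ → ℕ) (hθ : ∀ n : ℕ, (n : ℝ) ≤ ∑ i ∈ Finset.range (θ n + 1), a i)
    (χ : ℕ → ℕ)
    (hχ : ∀ k : ℕ, ∀ n, χ k ≤ n → ∀ p : ℕ,
      ∑ i ∈ Finset.Icc (n + 1) (n + p), c i ≤ 1 / (k + 1)) :
    ∀ k : ℕ, ∀ n,
      θ (χ (2 * k + 1) + 1 + ⌈Real.log ((2 * L * (k + 1) : ℕ) : ℝ)⌉₊) + 1 ≤ n →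
      s n ≤ 1 / (k + 1) := by
  intro k n hn
  set m := χ (2 * k + 1) + 1
  set M := ⌈Real.log ((2 * L * (k + 1) : ℕ) : ℝ)⌉₊
  have hmn : m ≤ n := by
    have := IsRateOfDivergence.le_add_one hθ (fun i => (ha i).2) (m + M); omega
  have hprod : ∏ i ∈ Ico m n, (1 - a i) ≤ exp (-M) :=
    (prod_one_sub_le_exp_neg_sum _ fun i _ => (ha i).2).trans <|
      exp_le_exp.mpr <| neg_le_neg <| IsRateOfDivergence.le_sum_Ico hθ ha hn
  have htail : ∑ i ∈ Ico m n, c i ≤ 1 / ((2 * k + 1 : ℕ) + 1) :=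
    IsCauchyModulus.sum_Ico_le hχ le_rfl hmn
  have hexp : 2 * L * (k + 1) ≤ exp M := by exact_mod_cast le_exp_ceil_log _
  have hL : exp (-M) * L ≤ 1 / (2 * (k + 1)) := by
    rw [exp_neg, inv_mul_le_iff₀ (exp_pos _)]
    field_simp
    linarith
  have hfirst : (∏ i ∈ Ico m n, (1 - a i)) * s m ≤ exp (-M) * L :=
    (mul_le_mul_of_nonneg_left (hLs m) (prod_nonneg fun i _ => sub_nonneg.mpr (ha i).2)).trans
      (mul_le_mul_of_nonneg_right hprod (Nat.cast_nonneg L))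
  calc s n ≤ (∏ i ∈ Ico m n, (1 - a i)) * s m + ∑ i ∈ Ico m n, c i :=
        le_prod_mul_add_sum_of_le_one_sub_mul_add ha hc hrec hmn
    _ ≤ 1 / (2 * (k + 1)) + 1 / (2 * (k + 1)) := by
        push_cast at htail
        rw [show (2 * k + 1 + 1 : ℝ) = 2 * (k + 1) by ring] at htail
        linarith
    _ = 1 / (k + 1) := by field_simp; ring

/-- Quantitative version of Xu's lemma: rate of convergence of `s n` to `0`. -/
theorem stmt_4 (a c s : ℕ → ℝ)
    (ha : ∀ n, a n ∈ Set.Icc (0 : ℝ) 1)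
    (hc : ∀ n, 0 ≤ c n) (hs : ∀ n, 0 ≤ s n)
    (hrec : ∀ n : ℕ, s (n + 1) ≤ (1 - a n) * s n + c n)
    (L : ℕ) (hL1 : 1 ≤ L) (hLs : ∀ n, s n ≤ (L : ℝ))
    (θ : ℕ → ℕ) (hθ : ∀ n : ℕ, (n : ℝ) ≤ ∑ i ∈ Finset.range (θ n + 1), a i)
    (χ : ℕ → ℕ)
    (hχ : ∀ k : ℕ, ∀ n, χ k ≤ n → ∀ p : ℕ,
      ∑ i ∈ Finset.Icc (n + 1) (n + p), c i ≤ 1 / (k + 1)) :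
    ∀ k : ℕ, ∀ n,
      θ (χ (2 * k + 1) + 1 + ⌈Real.log ((2 * L * (k + 1) : ℕ) : ℝ)⌉₊) + 1 ≤ n →
      s n ≤ 1 / (k + 1) :=
  stmt_4_general a c s ha hc hrec L hLs θ hθ χ hχ
end

section
/- Let L > 0, J, N ∈ ℕ with J ≥ N ≥ 2, γ ∈ (0, 1], (c_n) be a sequence of real numbers bounded above by L, and a_n = N/(γ(n + J)) for all n ∈ ℕ. Suppose (s_n) is a sequence of nonnegative real numbers with s_0 ≤ L such that s_{n+1} ≤ (1 − γ·a_{n+1})·s_n + (a_n − a_{n+1})·c_n for all n ∈ ℕ. Then s_n ≤ J·L/(γ(n + J)) for all n ∈ ℕ. -/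
/-!
Set `b n = J L / (γ (n + J))`. Since `c n ≤ L` and both coefficients of the recursion are
nonnegative, it suffices that `b` is a supersolution of the recursion with `c n` replaced by `L`;
an induction then keeps `s n` below `b n`. The supersolution property reduces to the identity
`b (n+1) - (1 - γ a (n+1)) b n - (a n - a (n+1)) L = L (J N - J - N) / (γ (n+J) (n+1+J))`,
whose numerator is nonnegative because `(J - 1) (N - 1) ≥ 1` when `J, N ≥ 2`.
-/

theorem le_of_rec_le_of_supersolution {s b α β : ℕ → ℝ} (h0 : s 0 ≤ b 0)
    (hα : ∀ n, 0 ≤ α n) (hrec : ∀ n, s (n + 1) ≤ α n * s n + β n)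
    (hsuper : ∀ n, α n * b n + β n ≤ b (n + 1)) (n : ℕ) : s n ≤ b n := by
  induction n with
  | zero => exact h0
  | succ n ih =>
    calc s (n + 1) ≤ α n * s n + β n := hrec n
      _ ≤ α n * b n + β n := by gcongr; exact hα n
      _ ≤ b (n + 1) := hsuper n

theorem sabach_shtern_step {J N L γ x : ℝ} (hγ : 0 < γ) (hx : 0 < x) (hL : 0 ≤ L)
    (hJN : J + N ≤ J * N) :
    (1 - γ * (N / (γ * (x + 1)))) * (J * L / (γ * x)) + (N / (γ * x) - N / (γ * (x + 1))) * L
      ≤ J * L / (γ * (x + 1)) := by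
  have key : J * L / (γ * (x + 1)) -
      ((1 - γ * (N / (γ * (x + 1)))) * (J * L / (γ * x)) + (N / (γ * x) - N / (γ * (x + 1))) * L)
      = L * (J * N - J - N) / (γ * (x * (x + 1))) := by
    field_simp
    ring
  have hnum : 0 ≤ J * N - J - N := by linarith
  rw [← sub_nonneg, key]
  positivity

theorem sabach_shtern_coeff_nonneg {N γ x : ℝ} (hγ : 0 < γ) (hx : 0 < x) (hNx : N ≤ x + 1) :
    0 ≤ 1 - γ * (N / (γ * (x + 1))) := by
  rw [mul_div_assoc', mul_div_mul_left _ _ hγ.ne', sub_nonneg, div_le_one (by linarith)]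
  exact hNx

theorem stmt_5_general (L : ℝ) (hL : 0 < L) (J N : ℕ) (hN : 2 ≤ N) (hJN : N ≤ J)
    (γ : ℝ) (hγ0 : 0 < γ) (hγ1 : γ ≤ 1)
    (c : ℕ → ℝ) (hc : ∀ n, c n ≤ L)
    (a : ℕ → ℝ) (ha : ∀ n : ℕ, a n = N / (γ * (n + J)))
    (s : ℕ → ℝ) (hs0 : s 0 ≤ L)
    (hrec : ∀ n : ℕ, s (n + 1) ≤ (1 - γ * a (n + 1)) * s n + (a n - a (n + 1)) * c n) :
    ∀ n : ℕ, s n ≤ J * L / (γ * (n + J)) := by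
  have hNr : (2 : ℝ) ≤ N := by exact_mod_cast hN
  have hNJ : (N : ℝ) ≤ J := by exact_mod_cast hJN
  have hsucc (n : ℕ) : ((n + 1 : ℕ) : ℝ) + J = (n + J) + 1 := by push_cast; ring
  have hpos (n : ℕ) : (0 : ℝ) < n + J := by linarith [(n.cast_nonneg : (0 : ℝ) ≤ n)]
  have ha_succ (n : ℕ) : a (n + 1) = N / (γ * ((n + J) + 1)) := by rw [ha, hsucc]
  refine le_of_rec_le_of_supersolution ?_ (fun n ↦ ?_) hrec (fun n ↦ ?_)
  · calc s 0 ≤ L := hs0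
      _ ≤ L / γ := le_div_self hL.le hγ0 hγ1
      _ = J * L / (γ * ((0 : ℕ) + J)) := by
          have hJ : (J : ℝ) ≠ 0 := by linarith
          field_simp
          simp
  · rw [ha_succ]
    exact sabach_shtern_coeff_nonneg hγ0 (hpos n) (by linarith [hpos n])
  · have ha_anti : 0 ≤ a n - a (n + 1) := by
      rw [ha_succ, ha n, sub_nonneg]
      exact div_le_div_of_nonneg_left N.cast_nonneg (by positivity [hpos n]) (by linarith)
    calc (1 - γ * a (n + 1)) * (J * L / (γ * (n + J))) + (a n - a (n + 1)) * c n
        ≤ (1 - γ * a (n + 1)) * (J * L / (γ * (n + J))) + (a n - a (n + 1)) * L := by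
          grw [hc n]
      _ ≤ J * L / (γ * ((n + J) + 1)) := by
          rw [ha_succ, ha n]
          exact sabach_shtern_step hγ0 (hpos n) hL.le (by nlinarith)
      _ = J * L / (γ * ((n + 1 : ℕ) + J)) := by rw [hsucc]

/-- Variant of the Sabach–Shtern lemma. -/
theorem stmt_5 (L : ℝ) (hL : 0 < L) (J N : ℕ) (hN : 2 ≤ N) (hJN : N ≤ J)
    (γ : ℝ) (hγ0 : 0 < γ) (hγ1 : γ ≤ 1)
    (c : ℕ → ℝ) (hc : ∀ n, c n ≤ L)
    (a : ℕ → ℝ) (ha : ∀ n : ℕ, a n = N / (γ * (n + J)))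
    (s : ℕ → ℝ) (hs : ∀ n, 0 ≤ s n) (hs0 : s 0 ≤ L)
    (hrec : ∀ n : ℕ, s (n + 1) ≤ (1 - γ * a (n + 1)) * s n + (a n - a (n + 1)) * c n) :
    ∀ n : ℕ, s n ≤ J * L / (γ * (n + J)) :=
  stmt_5_general L hL J N hN hJN γ hγ0 hγ1 c hc a ha s hs0 hrec
end

section
/- Let X be a real Banach space, A : X → Set X an accretive operator with zer A ≠ ∅, and for each γ > 0 let J_γ : X → X be a resolvent function of A. Let α ∈ [0,1), f : X → X an α-contraction, x ∈ X, (α_n) a sequence in [0,1], (λ_n) a sequence in (0,∞), (e_n) a sequence in X, (x_n) the VAMe iteration, and z ∈ zer A. Then for all n ∈ ℕ: ‖x_{n+2} − x_{n+1}‖ ≤ (1 − (1 − α)α_{n+1})·‖x_{n+1} − x_n‖ + M_{z,n} + ‖e_{n+1} − e_n‖, where M_{z,n} = 2·K_{z,n}·(|α_{n+1} − α_n| + (1 − α_{n+1})·|1 − λ_{n+1}/λ_n|); and also ‖x_{n+2} − x_{n+1}‖ ≤ (1 − (1 − α)α_{n+1})·‖x_{n+1} − x_n‖ + M*_{z,n}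 + ‖e_{n+1} − e_n‖, where M*_{z,n} = 2·K_{z,n}·(|α_{n+1} − α_n| + (1 − α_{n+1})·|1 − λ_n/λ_{n+1}|). -/
/-- Main recursive inequalities for the VAMe iteration. -/
theorem stmt_7 {X : Type*} [NormedAddCommGroup X] [NormedSpace ℝ X] [CompleteSpace X]
    (A : X → Set X)
    (hA : ∀ x y u v : X, u ∈ A x → v ∈ A y → ∀ γ : ℝ, 0 < γ →
      ‖x - y‖ ≤ ‖x - y + γ • (u - v)‖)
    (hzer : ∃ z : X, (0 : X) ∈ A z)
    (Jr : ℝ → X → X)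
    (hJ : ∀ γ : ℝ, 0 < γ → ∀ x : X, γ⁻¹ • (x - Jr γ x) ∈ A (Jr γ x))
    (α : ℝ) (hα0 : 0 ≤ α) (hα1 : α < 1)
    (f : X → X) (hf : ∀ x y : X, ‖f x - f y‖ ≤ α * ‖x - y‖)
    (x : X)
    (a : ℕ → ℝ) (ha : ∀ n, a n ∈ Set.Icc (0 : ℝ) 1)
    (lam : ℕ → ℝ) (hlam : ∀ n, 0 < lam n)
    (e : ℕ → X)
    (xs : ℕ → X) (hxs0 : xs 0 = x)
    (hxs : ∀ n : ℕ, xs (n + 1) = a n • f (xs n) + (1 - a n) • Jr (lam n) (xs n) + e n)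
    (z : X) (hz : (0 : X) ∈ A z)
    (K : ℕ → ℝ) (hK0 : K 0 = max ‖x - z‖ (‖f z - z‖ / (1 - α)))
    (hKsucc : ∀ n : ℕ, K (n + 1) = K n + ‖e n‖) :
    ∀ n : ℕ,
      ‖xs (n + 2) - xs (n + 1)‖ ≤
        (1 - (1 - α) * a (n + 1)) * ‖xs (n + 1) - xs n‖ +
          2 * K n * (|a (n + 1) - a n| + (1 - a (n + 1)) * |1 - lam (n + 1) / lam n|) +
          ‖e (n + 1) - e n‖ ∧
      ‖xs (n + 2) - xs (n + 1)‖ ≤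
        (1 - (1 - α) * a (n + 1)) * ‖xs (n + 1) - xs n‖ +
          2 * K n * (|a (n + 1) - a n| + (1 - a (n + 1)) * |1 - lam n / lam (n + 1)|) +
          ‖e (n + 1) - e n‖ := by
  -- fixed point property of resolvents at z
  have hfix : ∀ γ : ℝ, 0 < γ → Jr γ z = z := by
    intro γ hγ
    have h := hA (Jr γ z) z (γ⁻¹ • (z - Jr γ z)) 0 (hJ γ hγ z) hz γ hγ
    have hv : Jr γ z - z + γ • (γ⁻¹ • (z - Jr γ z) - 0) = 0 := by
      rw [sub_zero, smul_smul, mul_inv_cancel₀ hγ.ne', one_smul]; abel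
    rw [hv, norm_zero] at h
    exact sub_eq_zero.mp (norm_le_zero_iff.mp h)
  -- nonexpansiveness
  have hne : ∀ γ : ℝ, 0 < γ → ∀ u v : X, ‖Jr γ u - Jr γ v‖ ≤ ‖u - v‖ := by
    intro γ hγ u v
    have h := hA (Jr γ u) (Jr γ v) _ _ (hJ γ hγ u) (hJ γ hγ v) γ hγ
    have hv : Jr γ u - Jr γ v + γ • (γ⁻¹ • (u - Jr γ u) - γ⁻¹ • (v - Jr γ v)) = u - v := by
      rw [smul_sub, smul_smul, smul_smul, mul_inv_cancel₀ hγ.ne', one_smul, one_smul]; abel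
    rwa [hv] at h
  -- resolvent comparison for different parameters
  have hres : ∀ l m : ℝ, 0 < l → 0 < m → ∀ w : X,
      ‖Jr l w - Jr m w‖ ≤ |1 - m / l| * ‖w - Jr l w‖ := by
    intro l m hl hm w
    have h := hA (Jr l w) (Jr m w) _ _ (hJ l hl w) (hJ m hm w) m hm
    have hv : Jr l w - Jr m w + m • (l⁻¹ • (w - Jr l w) - m⁻¹ • (w - Jr m w))
        = (1 - m / l) • (Jr l w - w) := by
      rw [smul_sub, smul_smul, smul_smul, mul_inv_cancel₀ hm.ne', one_smul, sub_smul,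
        one_smul, div_eq_mul_inv]
      module
    rw [hv, norm_smul, Real.norm_eq_abs, norm_sub_rev (Jr l w) w] at h
    exact h
  -- facts about K
  have hKmono : ∀ n, K n ≤ K (n + 1) := by
    intro n; rw [hKsucc]; linarith [norm_nonneg (e n)]
  have hK0le : ∀ n, K 0 ≤ K n := by
    intro n; induction n with
    | zero => exact le_rfl
    | succ n ih => exact ih.trans (hKmono n)
  have hKnn : ∀ n, 0 ≤ K n := by
    intro n
    refine le_trans ?_ (hK0le n)
    rw [hK0]; exact le_trans (norm_nonneg _) (le_max_left _ _)
  have hfz : ∀ n, ‖f z - z‖ ≤ (1 - α) * K n := by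
    intro n
    have h1 : ‖f z - z‖ / (1 - α) ≤ K n := le_trans (by rw [hK0]; exact le_max_right _ _) (hK0le n)
    have h2 : 0 < 1 - α := by linarith
    calc ‖f z - z‖ = ‖f z - z‖ / (1 - α) * (1 - α) := by field_simp
      _ ≤ K n * (1 - α) := by exact mul_le_mul_of_nonneg_right h1 h2.le
      _ = (1 - α) * K n := by ring
  -- boundedness
  have hxz : ∀ n, ‖xs n - z‖ ≤ K n := by
    intro n; induction n with
    | zero => rw [hxs0, hK0]; exact le_max_left _ _
    | succ n ih =>
      have ha0 := (ha n).1
      have ha1 := (ha n).2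
      have hdec : xs (n + 1) - z
          = a n • (f (xs n) - f z) + a n • (f z - z)
            + (1 - a n) • (Jr (lam n) (xs n) - z) + e n := by
        rw [hxs n]; module
      have hJb : ‖Jr (lam n) (xs n) - z‖ ≤ ‖xs n - z‖ := by
        calc ‖Jr (lam n) (xs n) - z‖ = ‖Jr (lam n) (xs n) - Jr (lam n) z‖ := by
              rw [hfix (lam n) (hlam n)]
          _ ≤ ‖xs n - z‖ := hne (lam n) (hlam n) _ _
      have tri : ‖xs (n + 1) - z‖ ≤ ‖a n • (f (xs n) - f z)‖ + ‖a n • (f z - z)‖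
          + ‖(1 - a n) • (Jr (lam n) (xs n) - z)‖ + ‖e n‖ := by
        rw [hdec]
        exact le_trans (norm_add_le _ _) (add_le_add
          (le_trans (norm_add_le _ _) (add_le_add (norm_add_le _ _) le_rfl)) le_rfl)
      rw [norm_smul, norm_smul, norm_smul, Real.norm_eq_abs, Real.norm_eq_abs,
        abs_of_nonneg ha0, abs_of_nonneg (by linarith : (0:ℝ) ≤ 1 - a n)] at tri
      have h1 : ‖f (xs n) - f z‖ ≤ α * ‖xs n - z‖ := hf _ _
      have h2 := hfz n
      rw [hKsucc n]
      have hnn := norm_nonneg (xs n - z)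
      nlinarith [mul_nonneg ha0 (sub_nonneg.mpr ih), mul_nonneg ha0 (sub_nonneg.mpr h1),
        mul_nonneg ha0 (sub_nonneg.mpr h2), mul_nonneg (mul_nonneg ha0 hα0) (sub_nonneg.mpr ih),
        mul_nonneg (sub_nonneg.mpr ha1) (sub_nonneg.mpr (hJb.trans ih))]
  -- distance to resolvent bound
  have hdist : ∀ γ : ℝ, 0 < γ → ∀ n, ‖xs n - Jr γ (xs n)‖ ≤ 2 * K n := by
    intro γ hγ n
    have h1 : ‖z - Jr γ (xs n)‖ ≤ ‖xs n - z‖ := by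
      calc ‖z - Jr γ (xs n)‖ = ‖Jr γ z - Jr γ (xs n)‖ := by rw [hfix γ hγ]
        _ ≤ ‖z - xs n‖ := hne γ hγ _ _
        _ = ‖xs n - z‖ := norm_sub_rev _ _
    calc ‖xs n - Jr γ (xs n)‖ ≤ ‖xs n - z‖ + ‖z - Jr γ (xs n)‖ := by
          have := norm_add_le (xs n - z) (z - Jr γ (xs n)); simpa using this
      _ ≤ 2 * K n := by have := hxz n; linarith
  -- bound on ‖f xs n - Jr (lam n) xs n‖
  have hfJ : ∀ n, ‖f (xs n) - Jr (lam n) (xs n)‖ ≤ 2 * K n := by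
    intro n
    have h1 : ‖f (xs n) - f z‖ ≤ α * ‖xs n - z‖ := hf _ _
    have h2 := hfz n
    have h3 : ‖z - Jr (lam n) (xs n)‖ ≤ ‖xs n - z‖ := by
      calc ‖z - Jr (lam n) (xs n)‖ = ‖Jr (lam n) z - Jr (lam n) (xs n)‖ := by
            rw [hfix (lam n) (hlam n)]
        _ ≤ ‖z - xs n‖ := hne (lam n) (hlam n) _ _
        _ = ‖xs n - z‖ := norm_sub_rev _ _
    have tri : ‖f (xs n) - Jr (lam n) (xs n)‖ ≤ ‖f (xs n) - f z‖ + ‖f z - z‖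
        + ‖z - Jr (lam n) (xs n)‖ := by
      have := norm_add_le (f (xs n) - f z + (f z - z)) (z - Jr (lam n) (xs n))
      have h4 := norm_add_le (f (xs n) - f z) (f z - z)
      calc ‖f (xs n) - Jr (lam n) (xs n)‖
          = ‖f (xs n) - f z + (f z - z) + (z - Jr (lam n) (xs n))‖ := by abel_nf
        _ ≤ ‖f (xs n) - f z + (f z - z)‖ + ‖z - Jr (lam n) (xs n)‖ := this
        _ ≤ ‖f (xs n) - f z‖ + ‖f z - z‖ + ‖z - Jr (lam n) (xs n)‖ := by linarith
    have := hxz n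
    have hα' := mul_le_mul_of_nonneg_left (hxz n) hα0
    nlinarith
  -- main estimate
  intro n
  have ha0 := (ha (n + 1)).1
  have ha1 := (ha (n + 1)).2
  have hdec : xs (n + 2) - xs (n + 1)
      = a (n + 1) • (f (xs (n + 1)) - f (xs n))
        + (1 - a (n + 1)) • (Jr (lam (n + 1)) (xs (n + 1)) - Jr (lam n) (xs n))
        + (a (n + 1) - a n) • (f (xs n) - Jr (lam n) (xs n))
        + (e (n + 1) - e n) := by
    have h2 := hxs (n + 1)
    have h1 := hxs n
    rw [show n + 2 = n + 1 + 1 from rfl, h2, h1]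
    module
  have main : ∀ L : ℝ, 0 ≤ L →
      ‖Jr (lam (n + 1)) (xs n) - Jr (lam n) (xs n)‖ ≤ L * (2 * K n) →
      ‖xs (n + 2) - xs (n + 1)‖ ≤
        (1 - (1 - α) * a (n + 1)) * ‖xs (n + 1) - xs n‖ +
          2 * K n * (|a (n + 1) - a n| + (1 - a (n + 1)) * L) + ‖e (n + 1) - e n‖ := by
    intro L hL hJL
    have hd2 : ‖Jr (lam (n + 1)) (xs (n + 1)) - Jr (lam n) (xs n)‖
        ≤ ‖xs (n + 1) - xs n‖ + L * (2 * K n) := by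
      calc ‖Jr (lam (n + 1)) (xs (n + 1)) - Jr (lam n) (xs n)‖
          ≤ ‖Jr (lam (n + 1)) (xs (n + 1)) - Jr (lam (n + 1)) (xs n)‖
            + ‖Jr (lam (n + 1)) (xs n) - Jr (lam n) (xs n)‖ := by
            have := norm_add_le (Jr (lam (n + 1)) (xs (n + 1)) - Jr (lam (n + 1)) (xs n))
              (Jr (lam (n + 1)) (xs n) - Jr (lam n) (xs n))
            simpa using this
        _ ≤ ‖xs (n + 1) - xs n‖ + L * (2 * K n) :=
            add_le_add (hne (lam (n + 1)) (hlam (n + 1)) _ _) hJL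
    have tri : ‖xs (n + 2) - xs (n + 1)‖
        ≤ ‖a (n + 1) • (f (xs (n + 1)) - f (xs n))‖
          + ‖(1 - a (n + 1)) • (Jr (lam (n + 1)) (xs (n + 1)) - Jr (lam n) (xs n))‖
          + ‖(a (n + 1) - a n) • (f (xs n) - Jr (lam n) (xs n))‖
          + ‖e (n + 1) - e n‖ := by
      rw [hdec]
      exact le_trans (norm_add_le _ _) (add_le_add
        (le_trans (norm_add_le _ _) (add_le_add (norm_add_le _ _) le_rfl)) le_rfl)
    rw [norm_smul, norm_smul, norm_smul, Real.norm_eq_abs, Real.norm_eq_abs, Real.norm_eq_abs,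
      abs_of_nonneg ha0, abs_of_nonneg (by linarith : (0:ℝ) ≤ 1 - a (n + 1))] at tri
    have h1 : a (n + 1) * ‖f (xs (n + 1)) - f (xs n)‖ ≤ a (n + 1) * (α * ‖xs (n + 1) - xs n‖) :=
      mul_le_mul_of_nonneg_left (hf _ _) ha0
    have h2 : (1 - a (n + 1)) * ‖Jr (lam (n + 1)) (xs (n + 1)) - Jr (lam n) (xs n)‖
        ≤ (1 - a (n + 1)) * (‖xs (n + 1) - xs n‖ + L * (2 * K n)) :=
      mul_le_mul_of_nonneg_left hd2 (by linarith)
    have h3 : |a (n + 1) - a n| * ‖f (xs n) - Jr (lam n) (xs n)‖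
        ≤ |a (n + 1) - a n| * (2 * K n) :=
      mul_le_mul_of_nonneg_left (hfJ n) (abs_nonneg _)
    calc ‖xs (n + 2) - xs (n + 1)‖
        ≤ a (n + 1) * (α * ‖xs (n + 1) - xs n‖)
          + (1 - a (n + 1)) * (‖xs (n + 1) - xs n‖ + L * (2 * K n))
          + |a (n + 1) - a n| * (2 * K n) + ‖e (n + 1) - e n‖ := by linarith
      _ = (1 - (1 - α) * a (n + 1)) * ‖xs (n + 1) - xs n‖ +
          2 * K n * (|a (n + 1) - a n| + (1 - a (n + 1)) * L) + ‖e (n + 1) - e n‖ := by ring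
  constructor
  · refine main _ (abs_nonneg _) ?_
    calc ‖Jr (lam (n + 1)) (xs n) - Jr (lam n) (xs n)‖
        = ‖Jr (lam n) (xs n) - Jr (lam (n + 1)) (xs n)‖ := norm_sub_rev _ _
      _ ≤ |1 - lam (n + 1) / lam n| * ‖xs n - Jr (lam n) (xs n)‖ :=
          hres (lam n) (lam (n + 1)) (hlam n) (hlam (n + 1)) _
      _ ≤ |1 - lam (n + 1) / lam n| * (2 * K n) :=
          mul_le_mul_of_nonneg_left (hdist (lam n) (hlam n) n) (abs_nonneg _)
  · refine main _ (abs_nonneg _) ?_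
    calc ‖Jr (lam (n + 1)) (xs n) - Jr (lam n) (xs n)‖
        ≤ |1 - lam n / lam (n + 1)| * ‖xs n - Jr (lam (n + 1)) (xs n)‖ :=
          hres (lam (n + 1)) (lam n) (hlam (n + 1)) (hlam n) _
      _ ≤ |1 - lam n / lam (n + 1)| * (2 * K n) :=
          mul_le_mul_of_nonneg_left (hdist (lam (n + 1)) (hlam (n + 1)) n) (abs_nonneg _)
end

section
/- Let X be a real Banach space, A : X → Set X an accretive operator with zer A ≠ ∅, and for each γ > 0 let J_γ : X → X be a resolvent function of A. Let α ∈ [0,1), f : X → X an α-contraction, x ∈ X, (α_n) a sequence in [0,1], (λ_n) a sequence in (0,∞), (e_n) a sequence in X, and (x_n) the VAMe iteration. Suppose Φ : ℕ → ℕ is a rate of asymptotic regularity of (x_n), θ₂ is a rate of convergence of ‖e_n‖ towards 0, σ₃ is a rate of convergence of (α_n) towards 0, θ₁ is a Cauchy modulus of Σ_{n=0}^∞ ‖e_n‖, z ∈ zer A, and K_z ∈ ℕ, K_z ≥ 1, satisfies K_z ≥ max{‖x − z‖, ‖f(z) − z‖/(1 − α)} + ⌈Σ_{i=0}^{θ₁(0)}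 ‖e_i‖⌉ + 1. Define Ψ(k) = max{σ₃(6K_z(k+1) − 1), Φ(3k+2), θ₂(3k+2)}. Then Ψ is a rate of (J_{λ_n})-asymptotic regularity of (x_n): for all k ∈ ℕ and all n ≥ Ψ(k), ‖J_{λ_n} x_n − x_n‖ ≤ 1/(k+1). -/
/-!
At a zero `z` of the accretive operator `A`, every resolvent is quasi-nonexpansive:
`‖J y - z‖ ≤ ‖y - z‖`. An `α`-contraction `f` satisfies `‖f y - z‖ ≤ max ‖y - z‖ M` for
`M ≥ ‖f z - z‖ / (1 - α)`, so each VAMe step increases `max ‖xₙ - z‖ M` by at most `‖eₙ‖`, and the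
Cauchy modulus `θ₁` bounds the partial sums of the errors: all iterates lie within `K_z` of `z`.
Now `xₙ₊₁ - J xₙ = αₙ (f xₙ - J xₙ) + eₙ` with `‖f xₙ - J xₙ‖ ≤ 2 K_z`, so going through `xₙ₊₁`,
`‖J xₙ - xₙ‖ ≤ ‖xₙ₊₁ - xₙ‖ + 2 K_z αₙ + ‖eₙ‖`, and beyond `Ψ k` each term is at most
`1 / (3 (k + 1))`.
-/

open Finset

section Operators

variable {X : Type*} [SeminormedAddCommGroup X]

theorem norm_sub_le_max_of_contraction {f : X → X} {α : ℝ} (hα0 : 0 ≤ α) (hα1 : α < 1)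
    (hf : ∀ x y : X, ‖f x - f y‖ ≤ α * ‖x - y‖) {z : X} {M : ℝ} (hM : ‖f z - z‖ / (1 - α) ≤ M)
    (y : X) : ‖f y - z‖ ≤ max ‖y - z‖ M := by
  have hfz : ‖f z - z‖ ≤ (1 - α) * M := by rwa [div_le_iff₀' (by linarith)] at hM
  calc ‖f y - z‖ ≤ ‖f y - f z‖ + ‖f z - z‖ := norm_sub_le_norm_sub_add_norm_sub _ _ _
    _ ≤ α * max ‖y - z‖ M + (1 - α) * max ‖y - z‖ M := by
      gcongr
      · exact (hf y z).trans (by gcongr; exact le_max_left _ _)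
      · exact hfz.trans (mul_le_mul_of_nonneg_left (le_max_right _ _) (by linarith))
    _ = max ‖y - z‖ M := by ring

variable [NormedSpace ℝ X]

def IsAccretive (A : X → Set X) : Prop :=
  ∀ x y u v : X, u ∈ A x → v ∈ A y → ∀ γ : ℝ, 0 < γ → ‖x - y‖ ≤ ‖x - y + γ • (u - v)‖

def IsResolvent (A : X → Set X) (J : ℝ → X → X) : Prop :=
  ∀ γ : ℝ, 0 < γ → ∀ x : X, γ⁻¹ • (x - J γ x) ∈ A (J γ x)

theorem IsAccretive.norm_resolvent_sub_le {A : X → Set X} {J : ℝ → X → X} (hA : IsAccretive A)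
    (hJ : IsResolvent A J) {z : X} (hz : (0 : X) ∈ A z) {γ : ℝ} (hγ : 0 < γ) (y : X) :
    ‖J γ y - z‖ ≤ ‖y - z‖ := by
  have key : J γ y - z + γ • (γ⁻¹ • (y - J γ y) - 0) = y - z := by
    rw [sub_zero, smul_smul, mul_inv_cancel₀ hγ.ne', one_smul]; abel
  simpa only [key] using hA _ _ _ _ (hJ γ hγ y) hz γ hγ

theorem norm_smul_add_one_sub_smul_add_le {a : ℝ} (ha : a ∈ Set.Icc (0 : ℝ) 1) (u v w : X) :
    ‖a • u + (1 - a) • v + w‖ ≤ a * ‖u‖ + (1 - a) * ‖v‖ + ‖w‖ := by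
  obtain ⟨ha0, ha1⟩ := ha
  calc ‖a • u + (1 - a) • v + w‖ ≤ ‖a • u‖ + ‖(1 - a) • v‖ + ‖w‖ := norm_add₃_le
    _ = a * ‖u‖ + (1 - a) * ‖v‖ + ‖w‖ := by
      rw [norm_smul, norm_smul, Real.norm_of_nonneg ha0, Real.norm_of_nonneg (by linarith)]

end Operators

theorem le_add_sum_range_of_le_max_add {s ε : ℕ → ℝ} {M : ℝ} (hε : ∀ n, 0 ≤ ε n) (h0 : s 0 ≤ M)
    (hs : ∀ n, s (n + 1) ≤ max (s n) M + ε n) (n : ℕ) : s n ≤ M + ∑ i ∈ range n, ε i := by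
  induction n with
  | zero => simpa using h0
  | succ n ih =>
    have : 0 ≤ ∑ i ∈ range n, ε i := sum_nonneg fun i _ ↦ hε i
    rw [sum_range_succ]
    linarith [hs n, max_le ih (by linarith : M ≤ M + ∑ i ∈ range n, ε i)]

theorem sum_range_le_of_sum_Icc_le {b : ℕ → ℝ} (hb : ∀ n, 0 ≤ b n) {N : ℕ} {c : ℝ}
    (hN : ∀ p, ∑ i ∈ Icc (N + 1) (N + p), b i ≤ c) (n : ℕ) :
    ∑ i ∈ range n, b i ≤ ∑ i ∈ range (N + 1), b i + c := by
  rcases le_or_gt n (N + 1) with hn | hn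
  · have hc : 0 ≤ c := by simpa using hN 0
    linarith [sum_le_sum_of_subset_of_nonneg (range_subset_range.2 hn) fun i _ _ ↦ hb i]
  · obtain ⟨p, rfl⟩ := Nat.exists_eq_add_of_le hn.le
    have htail : ∑ i ∈ Icc (N + 1) (N + p), b i = ∑ i ∈ range p, b (N + 1 + i) := by
      rw [← Ico_add_one_right_eq_Icc, sum_Ico_eq_sum_range,
        show N + p + 1 - (N + 1) = p by omega]
    rw [sum_range_add, ← htail]
    linarith [hN p]

section VAMe

variable {X : Type*} [SeminormedAddCommGroup X] [NormedSpace ℝ X] {A : X → Set X}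
  {J : ℝ → X → X} {α : ℝ} {f : X → X} {a lam : ℕ → ℝ} {e xs : ℕ → X} {z : X}

theorem norm_vame_sub_le (hA : IsAccretive A) (hJ : IsResolvent A J) (hz : (0 : X) ∈ A z)
    (hα0 : 0 ≤ α) (hα1 : α < 1) (hf : ∀ x y : X, ‖f x - f y‖ ≤ α * ‖x - y‖)
    (ha : ∀ n, a n ∈ Set.Icc (0 : ℝ) 1) (hlam : ∀ n, 0 < lam n)
    (hxs : ∀ n, xs (n + 1) = a n • f (xs n) + (1 - a n) • J (lam n) (xs n) + e n)
    {M : ℝ} (h0 : ‖xs 0 - z‖ ≤ M) (hM : ‖f z - z‖ / (1 - α) ≤ M) (n : ℕ) :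
    ‖xs n - z‖ ≤ M + ∑ i ∈ range n, ‖e i‖ := by
  refine le_add_sum_range_of_le_max_add (s := fun n ↦ ‖xs n - z‖) (fun i ↦ norm_nonneg (e i)) h0
    (fun n ↦ ?_) n
  have h1a : 0 ≤ 1 - a n := sub_nonneg.2 (ha n).2
  rw [hxs n, show a n • f (xs n) + (1 - a n) • J (lam n) (xs n) + e n - z
      = a n • (f (xs n) - z) + (1 - a n) • (J (lam n) (xs n) - z) + e n by module]
  calc _ ≤ a n * ‖f (xs n) - z‖ + (1 - a n) * ‖J (lam n) (xs n) - z‖ + ‖e n‖ :=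
        norm_smul_add_one_sub_smul_add_le (ha n) _ _ _
    _ ≤ a n * max ‖xs n - z‖ M + (1 - a n) * max ‖xs n - z‖ M + ‖e n‖ := by
        gcongr
        · exact (ha n).1
        · exact norm_sub_le_max_of_contraction hα0 hα1 hf hM _
        · exact (hA.norm_resolvent_sub_le hJ hz (hlam n) _).trans (le_max_left _ _)
    _ = max ‖xs n - z‖ M + ‖e n‖ := by ring

theorem norm_resolvent_vame_sub_le (hA : IsAccretive A) (hJ : IsResolvent A J)
    (hz : (0 : X) ∈ A z) (hα0 : 0 ≤ α) (hα1 : α < 1) (hf : ∀ x y : X, ‖f x - f y‖ ≤ α * ‖x - y‖)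
    (ha : ∀ n, a n ∈ Set.Icc (0 : ℝ) 1) (hlam : ∀ n, 0 < lam n)
    (hxs : ∀ n, xs (n + 1) = a n • f (xs n) + (1 - a n) • J (lam n) (xs n) + e n)
    {K : ℝ} (hM : ‖f z - z‖ / (1 - α) ≤ K) {n : ℕ} (hK : ‖xs n - z‖ ≤ K) :
    ‖J (lam n) (xs n) - xs n‖ ≤ ‖xs (n + 1) - xs n‖ + a n * (2 * K) + ‖e n‖ := by
  have hfJ : ‖f (xs n) - J (lam n) (xs n)‖ ≤ 2 * K := by
    have hfz := norm_sub_le_max_of_contraction hα0 hα1 hf hM (xs n)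
    have hJz := hA.norm_resolvent_sub_le hJ hz (hlam n) (xs n)
    have := norm_sub_le_norm_sub_add_norm_sub (f (xs n)) z (J (lam n) (xs n))
    rw [norm_sub_rev z] at this
    linarith [max_le hK le_rfl]
  have hstep : xs (n + 1) - J (lam n) (xs n) = a n • (f (xs n) - J (lam n) (xs n)) + e n := by
    rw [hxs n]; module
  calc ‖J (lam n) (xs n) - xs n‖ ≤ ‖xs (n + 1) - J (lam n) (xs n)‖ + ‖xs (n + 1) - xs n‖ := by
        rw [norm_sub_rev (xs (n + 1))]; exact norm_sub_le_norm_sub_add_norm_sub _ _ _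
    _ ≤ a n * ‖f (xs n) - J (lam n) (xs n)‖ + ‖e n‖ + ‖xs (n + 1) - xs n‖ := by
        rw [hstep]
        gcongr
        refine (norm_add_le _ _).trans_eq ?_
        rw [norm_smul, Real.norm_of_nonneg (ha n).1]
    _ ≤ ‖xs (n + 1) - xs n‖ + a n * (2 * K) + ‖e n‖ := by
        linarith [mul_le_mul_of_nonneg_left hfJ (ha n).1]

end VAMe

theorem stmt_11_general {X : Type*} [NormedAddCommGroup X] [NormedSpace ℝ X]
    (A : X → Set X)
    (hA : ∀ x y u v : X, u ∈ A x → v ∈ A y → ∀ γ : ℝ, 0 < γ →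
      ‖x - y‖ ≤ ‖x - y + γ • (u - v)‖)
    (Jr : ℝ → X → X)
    (hJ : ∀ γ : ℝ, 0 < γ → ∀ x : X, γ⁻¹ • (x - Jr γ x) ∈ A (Jr γ x))
    (α : ℝ) (hα0 : 0 ≤ α) (hα1 : α < 1)
    (f : X → X) (hf : ∀ x y : X, ‖f x - f y‖ ≤ α * ‖x - y‖)
    (x : X)
    (a : ℕ → ℝ) (ha : ∀ n, a n ∈ Set.Icc (0 : ℝ) 1)
    (lam : ℕ → ℝ) (hlam : ∀ n, 0 < lam n)
    (e : ℕ → X)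
    (xs : ℕ → X) (hxs0 : xs 0 = x)
    (hxs : ∀ n : ℕ, xs (n + 1) = a n • f (xs n) + (1 - a n) • Jr (lam n) (xs n) + e n)
    -- Φ is a rate of asymptotic regularity of (xs n)
    (Φ : ℕ → ℕ) (hΦ : ∀ k : ℕ, ∀ n, Φ k ≤ n → ‖xs (n + 1) - xs n‖ ≤ 1 / (k + 1))
    -- θ₂ is a rate of convergence of ‖e n‖ towards 0
    (θ₂ : ℕ → ℕ) (hθ₂ : ∀ k : ℕ, ∀ n, θ₂ k ≤ n → ‖e n‖ ≤ 1 / (k + 1))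
    -- σ₃ is a rate of convergence of (a n) towards 0
    (σ₃ : ℕ → ℕ) (hσ₃ : ∀ k : ℕ, ∀ n, σ₃ k ≤ n → a n ≤ 1 / (k + 1))
    -- θ₁ is a Cauchy modulus of Σ ‖e n‖
    (θ₁ : ℕ → ℕ)
    (hθ₁ : ∀ k : ℕ, ∀ n, θ₁ k ≤ n → ∀ p : ℕ,
      ∑ i ∈ Finset.Icc (n + 1) (n + p), ‖e i‖ ≤ 1 / (k + 1))
    (z : X) (hz : (0 : X) ∈ A z)
    (Kz : ℕ)
    (hKz : max ‖x - z‖ (‖f z - z‖ / (1 - α)) +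
      (⌈∑ i ∈ Finset.range (θ₁ 0 + 1), ‖e i‖⌉₊ : ℝ) + 1 ≤ (Kz : ℝ))
    (Ψ : ℕ → ℕ)
    (hΨ : ∀ k : ℕ, Ψ k =
      max (max (σ₃ (6 * Kz * (k + 1) - 1)) (Φ (3 * k + 2))) (θ₂ (3 * k + 2))) :
    ∀ k : ℕ, ∀ n, Ψ k ≤ n → ‖Jr (lam n) (xs n) - xs n‖ ≤ 1 / (k + 1) := by
  set M := max ‖x - z‖ (‖f z - z‖ / (1 - α))
  have hM0 : 0 ≤ M := (norm_nonneg _).trans (le_max_left _ _)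
  have hMK : M + 1 ≤ Kz := by
    linarith only [hKz, (⌈∑ i ∈ range (θ₁ 0 + 1), ‖e i‖⌉₊).cast_nonneg (α := ℝ)]
  have hbounded (n : ℕ) : ‖xs n - z‖ ≤ Kz := by
    have hsum := sum_range_le_of_sum_Icc_le (fun i ↦ norm_nonneg (e i)) (hθ₁ 0 (θ₁ 0) le_rfl) n
    have hxn := norm_vame_sub_le hA hJ hz hα0 hα1 hf ha hlam hxs
      (hxs0 ▸ le_max_left _ _ : ‖xs 0 - z‖ ≤ M) (le_max_right _ _) n
    norm_num at hsum
    linarith only [hsum, hxn, hKz, Nat.le_ceil (∑ i ∈ range (θ₁ 0 + 1), ‖e i‖)]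
  have hfzK : ‖f z - z‖ / (1 - α) ≤ Kz :=
    (le_max_right _ _).trans (by linarith only [hMK] : M ≤ Kz)
  intro k n hn
  simp only [hΨ, max_le_iff] at hn
  obtain ⟨⟨hnσ, hnΦ⟩, hnθ⟩ := hn
  have hKpos : 0 < Kz := by exact_mod_cast (by linarith only [hMK, hM0] : (0 : ℝ) < Kz)
  have hrate : ((3 * k + 2 : ℕ) : ℝ) + 1 = 3 * (k + 1) := by push_cast; ring
  have haK : a n * (2 * Kz) ≤ 1 / (3 * (k + 1)) := by
    have han := hσ₃ _ n hnσ
    rw [Nat.cast_pred (Nat.mul_pos (Nat.mul_pos (by norm_num) hKpos) k.succ_pos)] at han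
    push_cast at han
    calc a n * (2 * Kz) ≤ 1 / (6 * Kz * (k + 1)) * (2 * Kz) := by gcongr; simpa using han
      _ = 1 / (3 * (k + 1)) := by field_simp; ring
  have hxn := hΦ _ n hnΦ
  have hen := hθ₂ _ n hnθ
  rw [hrate] at hxn hen
  calc ‖Jr (lam n) (xs n) - xs n‖ ≤ ‖xs (n + 1) - xs n‖ + a n * (2 * Kz) + ‖e n‖ :=
        norm_resolvent_vame_sub_le hA hJ hz hα0 hα1 hf ha hlam hxs hfzK (hbounded n)
    _ ≤ 1 / (3 * (k + 1)) + 1 / (3 * (k + 1)) + 1 / (3 * (k + 1)) := by gcongr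
    _ = 1 / (k + 1) := by field_simp; ring

/-- Rate of `(J_{λ_n})`-asymptotic regularity of the VAMe iteration. -/
theorem stmt_11 {X : Type*} [NormedAddCommGroup X] [NormedSpace ℝ X] [CompleteSpace X]
    (A : X → Set X)
    (hA : ∀ x y u v : X, u ∈ A x → v ∈ A y → ∀ γ : ℝ, 0 < γ →
      ‖x - y‖ ≤ ‖x - y + γ • (u - v)‖)
    (hzer : ∃ z : X, (0 : X) ∈ A z)
    (Jr : ℝ → X → X)
    (hJ : ∀ γ : ℝ, 0 < γ → ∀ x : X, γ⁻¹ • (x - Jr γ x) ∈ A (Jr γ x))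
    (α : ℝ) (hα0 : 0 ≤ α) (hα1 : α < 1)
    (f : X → X) (hf : ∀ x y : X, ‖f x - f y‖ ≤ α * ‖x - y‖)
    (x : X)
    (a : ℕ → ℝ) (ha : ∀ n, a n ∈ Set.Icc (0 : ℝ) 1)
    (lam : ℕ → ℝ) (hlam : ∀ n, 0 < lam n)
    (e : ℕ → X)
    (xs : ℕ → X) (hxs0 : xs 0 = x)
    (hxs : ∀ n : ℕ, xs (n + 1) = a n • f (xs n) + (1 - a n) • Jr (lam n) (xs n) + e n)
    -- Φ is a rate of asymptotic regularity of (xs n)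
    (Φ : ℕ → ℕ) (hΦ : ∀ k : ℕ, ∀ n, Φ k ≤ n → ‖xs (n + 1) - xs n‖ ≤ 1 / (k + 1))
    -- θ₂ is a rate of convergence of ‖e n‖ towards 0
    (θ₂ : ℕ → ℕ) (hθ₂ : ∀ k : ℕ, ∀ n, θ₂ k ≤ n → ‖e n‖ ≤ 1 / (k + 1))
    -- σ₃ is a rate of convergence of (a n) towards 0
    (σ₃ : ℕ → ℕ) (hσ₃ : ∀ k : ℕ, ∀ n, σ₃ k ≤ n → a n ≤ 1 / (k + 1))
    -- θ₁ is a Cauchy modulus of Σ ‖e n‖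
    (θ₁ : ℕ → ℕ)
    (hθ₁ : ∀ k : ℕ, ∀ n, θ₁ k ≤ n → ∀ p : ℕ,
      ∑ i ∈ Finset.Icc (n + 1) (n + p), ‖e i‖ ≤ 1 / (k + 1))
    (z : X) (hz : (0 : X) ∈ A z)
    (Kz : ℕ) (hKz1 : 1 ≤ Kz)
    (hKz : max ‖x - z‖ (‖f z - z‖ / (1 - α)) +
      (⌈∑ i ∈ Finset.range (θ₁ 0 + 1), ‖e i‖⌉₊ : ℝ) + 1 ≤ (Kz : ℝ))
    (Ψ : ℕ → ℕ)
    (hΨ : ∀ k : ℕ, Ψ k =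
      max (max (σ₃ (6 * Kz * (k + 1) - 1)) (Φ (3 * k + 2))) (θ₂ (3 * k + 2))) :
    ∀ k : ℕ, ∀ n, Ψ k ≤ n → ‖Jr (lam n) (xs n) - xs n‖ ≤ 1 / (k + 1) :=
  stmt_11_general A hA Jr hJ α hα0 hα1 f hf x a ha lam hlam e xs hxs0 hxs Φ hΦ θ₂ hθ₂ σ₃ hσ₃ θ₁ hθ₁
    z hz Kz hKz Ψ hΨ
end

section
/- Let X be a real Banach space, A : X → Set X an accretive operator with zer A ≠ ∅, and for each γ > 0 let J_γ : X → X be a resolvent function of A. Let α ∈ [0,1), f : X → X an α-contraction, x ∈ X, (α_n) a sequence in [0,1], (λ_n) a sequence in (0,∞), (e_n) a sequence in X, and (x_n) the VAMe iteration. Suppose Ψ : ℕ → ℕ is a rate of (J_{λ_n})-asymptotic regularity of (x_n), and Λ ∈ ℕ, Λ ≥ 1, and N_Λ ∈ ℕ are such that λ_n ≥ 1/Λ for all n ≥ N_Λ. Let m ∈ ℕ and Λ_m ∈ ℕ, Λ_m ≥ 1, with Λ_m ≥ λ_m. Define Θ_m(k) = max{N_Λ, Ψ(Λ_m·Λ·(k+1)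 − 1), Ψ(2k+1)}. Then Θ_m is a rate of J_{λ_m}-asymptotic regularity of (x_n): for all k ∈ ℕ and all n ≥ Θ_m(k), ‖J_{λ_m} x_n − x_n‖ ≤ 1/(k+1). -/
lemma resolvent_est {X : Type*} [NormedAddCommGroup X] [NormedSpace ℝ X]
    (A : X → Set X)
    (hA : ∀ x y u v : X, u ∈ A x → v ∈ A y → ∀ γ : ℝ, 0 < γ →
      ‖x - y‖ ≤ ‖x - y + γ • (u - v)‖)
    (Jr : ℝ → X → X)
    (hJ : ∀ γ : ℝ, 0 < γ → ∀ x : X, γ⁻¹ • (x - Jr γ x) ∈ A (Jr γ x))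
    (γ lam : ℝ) (hγ : 0 < γ) (hl : 0 < lam) (y : X) :
    ‖Jr γ y - Jr lam y‖ ≤ |1 - γ / lam| * ‖Jr lam y - y‖ := by
  have h := hA (Jr γ y) (Jr lam y) (γ⁻¹ • (y - Jr γ y)) (lam⁻¹ • (y - Jr lam y))
    (hJ γ hγ y) (hJ lam hl y) γ hγ
  have hkey : Jr γ y - Jr lam y + γ • (γ⁻¹ • (y - Jr γ y) - lam⁻¹ • (y - Jr lam y))
      = (1 - γ / lam) • (y - Jr lam y) := by
    match_scalars <;> field_simp <;> ring
  rw [hkey, norm_smul, Real.norm_eq_abs, ← norm_neg (y - Jr lam y)] at h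
  simpa using h

/-- Rate of `J_{λ_m}`-asymptotic regularity of the VAMe iteration. -/
theorem stmt_12 {X : Type*} [NormedAddCommGroup X] [NormedSpace ℝ X] [CompleteSpace X]
    (A : X → Set X)
    (hA : ∀ x y u v : X, u ∈ A x → v ∈ A y → ∀ γ : ℝ, 0 < γ →
      ‖x - y‖ ≤ ‖x - y + γ • (u - v)‖)
    (hzer : ∃ z : X, (0 : X) ∈ A z)
    (Jr : ℝ → X → X)
    (hJ : ∀ γ : ℝ, 0 < γ → ∀ x : X, γ⁻¹ • (x - Jr γ x) ∈ A (Jr γ x))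
    (α : ℝ) (hα0 : 0 ≤ α) (hα1 : α < 1)
    (f : X → X) (hf : ∀ x y : X, ‖f x - f y‖ ≤ α * ‖x - y‖)
    (x : X)
    (a : ℕ → ℝ) (ha : ∀ n, a n ∈ Set.Icc (0 : ℝ) 1)
    (lam : ℕ → ℝ) (hlam : ∀ n, 0 < lam n)
    (e : ℕ → X)
    (xs : ℕ → X) (hxs0 : xs 0 = x)
    (hxs : ∀ n : ℕ, xs (n + 1) = a n • f (xs n) + (1 - a n) • Jr (lam n) (xs n) + e n)
    -- Ψ is a rate of (J_{λ_n})-asymptotic regularity of (xs n)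
    (Ψ : ℕ → ℕ) (hΨ : ∀ k : ℕ, ∀ n, Ψ k ≤ n → ‖Jr (lam n) (xs n) - xs n‖ ≤ 1 / (k + 1))
    (Λ : ℕ) (hΛ : 1 ≤ Λ) (NΛ : ℕ)
    (hlow : ∀ n : ℕ, NΛ ≤ n → 1 / (Λ : ℝ) ≤ lam n)
    (m : ℕ) (Λm : ℕ) (hΛm1 : 1 ≤ Λm) (hΛm : lam m ≤ (Λm : ℝ))
    (Θ : ℕ → ℕ)
    (hΘ : ∀ k : ℕ, Θ k = max (max NΛ (Ψ (Λm * Λ * (k + 1) - 1))) (Ψ (2 * k + 1))) :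
    ∀ k : ℕ, ∀ n, Θ k ≤ n → ‖Jr (lam m) (xs n) - xs n‖ ≤ 1 / (k + 1) := by
  intro k n hn
  rw [hΘ k] at hn
  have hN : NΛ ≤ n := le_trans (le_trans (le_max_left _ _) (le_max_left _ _)) hn
  have hn1 : Ψ (Λm * Λ * (k + 1) - 1) ≤ n :=
    le_trans (le_trans (le_max_right _ _) (le_max_left _ _)) hn
  have hn2 : Ψ (2 * k + 1) ≤ n := le_trans (le_max_right _ _) hn
  have hγ := hlam m
  have hl := hlam n
  have htri : ‖Jr (lam m) (xs n) - xs n‖ ≤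
      (|1 - lam m / lam n| + 1) * ‖Jr (lam n) (xs n) - xs n‖ := by
    have h1 := resolvent_est A hA Jr hJ (lam m) (lam n) hγ hl (xs n)
    have h2 : ‖Jr (lam m) (xs n) - xs n‖ ≤
        ‖Jr (lam m) (xs n) - Jr (lam n) (xs n)‖ + ‖Jr (lam n) (xs n) - xs n‖ := by
      simpa using norm_sub_le_norm_sub_add_norm_sub (Jr (lam m) (xs n)) (Jr (lam n) (xs n)) (xs n)
    nlinarith [norm_nonneg (Jr (lam n) (xs n) - xs n)]
  have hkpos : (0:ℝ) < (k:ℝ) + 1 := by positivity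
  rcases le_or_gt (lam m / lam n) 1 with ht | ht
  · -- factor ≤ 2, use Ψ(2k+1)
    have hb := hΨ (2 * k + 1) n hn2
    have habs : |1 - lam m / lam n| + 1 ≤ 2 := by
      have : 0 ≤ lam m / lam n := by positivity
      rw [abs_of_nonneg (by linarith)]; linarith
    have : ‖Jr (lam m) (xs n) - xs n‖ ≤ 2 * ‖Jr (lam n) (xs n) - xs n‖ := by
      nlinarith [norm_nonneg (Jr (lam n) (xs n) - xs n)]
    have hb' : (1:ℝ) / ((2 * k + 1 : ℕ) + 1) = 1 / (2 * ((k:ℝ) + 1)) := by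
      push_cast; ring_nf
    rw [hb'] at hb
    calc ‖Jr (lam m) (xs n) - xs n‖ ≤ 2 * ‖Jr (lam n) (xs n) - xs n‖ := this
      _ ≤ 2 * (1 / (2 * ((k:ℝ) + 1))) := by linarith
      _ = 1 / ((k:ℝ) + 1) := by field_simp
  · -- factor = lam m / lam n ≤ Λm * Λ, use Ψ(Λm*Λ*(k+1)-1)
    have hb := hΨ (Λm * Λ * (k + 1) - 1) n hn1
    have hK1 : 1 ≤ Λm * Λ * (k + 1) := Nat.one_le_iff_ne_zero.mpr (by positivity)
    have hcast : ((Λm * Λ * (k + 1) - 1 : ℕ) : ℝ) + 1 = (Λm : ℝ) * Λ * ((k:ℝ) + 1) := by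
      have : (Λm * Λ * (k + 1) - 1) + 1 = Λm * Λ * (k + 1) := Nat.succ_pred_eq_of_pos hK1
      rw [show ((Λm * Λ * (k + 1) - 1 : ℕ) : ℝ) + 1 = (((Λm * Λ * (k + 1) - 1) + 1 : ℕ) : ℝ) by
        push_cast; ring, this]
      push_cast; ring
    rw [hcast] at hb
    have hlamn : 1 / (Λ : ℝ) ≤ lam n := hlow n hN
    have hΛpos : (0:ℝ) < (Λ : ℝ) := by exact_mod_cast hΛ
    have hΛmpos : (0:ℝ) < (Λm : ℝ) := by exact_mod_cast hΛm1
    have hfac : lam m / lam n ≤ (Λm : ℝ) * Λ := by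
      rw [div_le_iff₀ hl]
      have h1 : (Λm : ℝ) * Λ * (1 / (Λ : ℝ)) ≤ (Λm : ℝ) * Λ * lam n :=
        mul_le_mul_of_nonneg_left hlamn (by positivity)
      have h2 : (Λm : ℝ) * Λ * (1 / (Λ : ℝ)) = (Λm : ℝ) := by field_simp
      linarith
    have habs : |1 - lam m / lam n| + 1 ≤ (Λm : ℝ) * Λ := by
      rw [abs_of_nonpos (by linarith)]; linarith
    have hfin : ‖Jr (lam m) (xs n) - xs n‖ ≤ (Λm : ℝ) * Λ * ‖Jr (lam n) (xs n) - xs n‖ := by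
      nlinarith [norm_nonneg (Jr (lam n) (xs n) - xs n)]
    calc ‖Jr (lam m) (xs n) - xs n‖ ≤ (Λm : ℝ) * Λ * ‖Jr (lam n) (xs n) - xs n‖ := hfin
      _ ≤ (Λm : ℝ) * Λ * (1 / ((Λm : ℝ) * Λ * ((k:ℝ) + 1))) := by
          apply mul_le_mul_of_nonneg_left hb (by positivity)
      _ = 1 / ((k:ℝ) + 1) := by field_simp
end

section
/- Let X be a real Banach space, A : X → Set X an accretive operator with zer A ≠ ∅, and for each γ > 0 let J_γ : X → X be a resolvent function of A. Let α ∈ [0,1), f : X → X an α-contraction, x ∈ X, (α_n) a sequence in [0,1], (λ_n) a sequence in (0,∞), (e_n) a sequence in X, and (x_n) the VAMe iteration. Suppose lim_{n→∞} ‖x_n − x_{n+1}‖ = 0 and lim_{n→∞} ‖e_n‖ = 0. Then: (1) if lim_{n→∞} α_n = 0, then lim_{n→∞} ‖x_n − J_{λ_n} x_n‖ = 0; (2) if in addition inf_{n∈ℕ} λ_n > 0, then lim_{n→∞} ‖x_n − J_{λ_m} x_n‖ = 0 for every m ∈ ℕ. -/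
/-- Qualitative `(J_{λ_n})`- and `J_{λ_m}`-asymptotic regularity of the VAMe iteration. -/
theorem stmt_14 {X : Type*} [NormedAddCommGroup X] [NormedSpace ℝ X] [CompleteSpace X]
    (A : X → Set X)
    (hA : ∀ x y u v : X, u ∈ A x → v ∈ A y → ∀ γ : ℝ, 0 < γ →
      ‖x - y‖ ≤ ‖x - y + γ • (u - v)‖)
    (hzer : ∃ z : X, (0 : X) ∈ A z)
    (Jr : ℝ → X → X)
    (hJ : ∀ γ : ℝ, 0 < γ → ∀ x : X, γ⁻¹ • (x - Jr γ x) ∈ A (Jr γ x))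
    (α : ℝ) (hα0 : 0 ≤ α) (hα1 : α < 1)
    (f : X → X) (hf : ∀ x y : X, ‖f x - f y‖ ≤ α * ‖x - y‖)
    (x : X)
    (a : ℕ → ℝ) (ha : ∀ n, a n ∈ Set.Icc (0 : ℝ) 1)
    (lam : ℕ → ℝ) (hlam : ∀ n, 0 < lam n)
    (e : ℕ → X)
    (xs : ℕ → X) (hxs0 : xs 0 = x)
    (hxs : ∀ n : ℕ, xs (n + 1) = a n • f (xs n) + (1 - a n) • Jr (lam n) (xs n) + e n)
    (hasreg : Filter.Tendsto (fun n => ‖xs n - xs (n + 1)‖) Filter.atTop (nhds 0))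
    (he0 : Filter.Tendsto (fun n => ‖e n‖) Filter.atTop (nhds 0)) :
    (Filter.Tendsto a Filter.atTop (nhds 0) →
      Filter.Tendsto (fun n => ‖xs n - Jr (lam n) (xs n)‖) Filter.atTop (nhds 0)) ∧
    (Filter.Tendsto a Filter.atTop (nhds 0) → 0 < ⨅ n, lam n →
      ∀ m : ℕ,
        Filter.Tendsto (fun n => ‖xs n - Jr (lam m) (xs n)‖) Filter.atTop (nhds 0)) := by
  obtain ⟨z, hz⟩ := hzer
  -- quasi-nonexpansivity of resolvents at z
  have quasi : ∀ γ : ℝ, 0 < γ → ∀ y : X, ‖Jr γ y - z‖ ≤ ‖y - z‖ := by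
    intro γ hγ y
    have h := hA (Jr γ y) z (γ⁻¹ • (y - Jr γ y)) 0 (hJ γ hγ y) hz γ hγ
    have heq : Jr γ y - z + γ • (γ⁻¹ • (y - Jr γ y) - 0) = y - z := by
      rw [sub_zero, smul_smul, mul_inv_cancel₀ hγ.ne', one_smul]; abel
    rwa [heq] at h
  set c := ‖f z - z‖ with hc
  have hc0 : 0 ≤ c := norm_nonneg _
  set u : ℕ → ℝ := fun n => ‖xs n - z‖ with hu
  set d : ℕ → ℝ := fun n => ‖xs n - xs (n + 1)‖ with hd
  have hfz : ∀ n, ‖f (xs n) - z‖ ≤ α * u n + c := by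
    intro n
    calc ‖f (xs n) - z‖ ≤ ‖f (xs n) - f z‖ + ‖f z - z‖ := norm_sub_le_norm_sub_add_norm_sub _ _ _
    _ ≤ α * u n + c := by have := hf (xs n) z; simp only [hu]; linarith
  -- key recursive estimate
  have key : ∀ n, u (n + 1) ≤ (1 - a n * (1 - α)) * u n + a n * c + ‖e n‖ := by
    intro n
    have heq : xs (n + 1) - z
        = a n • (f (xs n) - z) + (1 - a n) • (Jr (lam n) (xs n) - z) + e n := by
      rw [hxs n]; module
    have h1 : u (n + 1) ≤ a n * ‖f (xs n) - z‖ + (1 - a n) * ‖Jr (lam n) (xs n) - z‖ + ‖e n‖ := by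
      simp only [hu]
      rw [heq]
      refine (norm_add_le _ _).trans ?_
      gcongr
      refine (norm_add_le _ _).trans ?_
      rw [norm_smul, norm_smul, Real.norm_eq_abs, Real.norm_eq_abs,
        abs_of_nonneg (ha n).1, abs_of_nonneg (by linarith [(ha n).2] : (0:ℝ) ≤ 1 - a n)]
    have h2 : ‖Jr (lam n) (xs n) - z‖ ≤ u n := quasi (lam n) (hlam n) (xs n)
    have h3 := hfz n
    have han0 : 0 ≤ a n := (ha n).1
    have han1 : a n ≤ 1 := (ha n).2
    nlinarith [h1, h2, h3]
  have lower : ∀ n, u n - d n ≤ u (n + 1) := by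
    intro n
    have := norm_sub_le_norm_sub_add_norm_sub (xs n) (xs (n + 1)) z
    simpa [hu, hd] using (by
      have h := norm_sub_le_norm_sub_add_norm_sub (xs n) (xs (n+1)) z
      linarith : ‖xs n - z‖ - ‖xs n - xs (n+1)‖ ≤ ‖xs (n+1) - z‖)
  -- Part 1
  have part1 : Filter.Tendsto a Filter.atTop (nhds 0) →
      Filter.Tendsto (fun n => ‖xs n - Jr (lam n) (xs n)‖) Filter.atTop (nhds 0) := by
    intro ha0
    -- a n * u n → 0
    have hbound : ∀ n, a n * u n ≤ (d n + a n * c + ‖e n‖) / (1 - α) := by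
      intro n
      rw [le_div_iff₀ (by linarith : (0:ℝ) < 1 - α)]
      have hk := key n
      have hl := lower n
      nlinarith [hk, hl]
    have hrhs : Filter.Tendsto (fun n => (d n + a n * c + ‖e n‖) / (1 - α))
        Filter.atTop (nhds 0) := by
      have : Filter.Tendsto (fun n => d n + a n * c + ‖e n‖) Filter.atTop (nhds (0 + 0 * c + 0)) :=
        ((hasreg.add (ha0.mul_const c)).add he0)
      simpa using this.div_const (1 - α)
    have hau : Filter.Tendsto (fun n => a n * u n) Filter.atTop (nhds 0) :=
      squeeze_zero (fun n => mul_nonneg (ha n).1 (norm_nonneg _)) hbound hrhs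
    -- main bound
    have hmain : ∀ n, ‖xs n - Jr (lam n) (xs n)‖
        ≤ d n + ((1 + α) * (a n * u n) + c * a n) + ‖e n‖ := by
      intro n
      have heq : xs (n + 1) - Jr (lam n) (xs n)
          = a n • (f (xs n) - Jr (lam n) (xs n)) + e n := by
        rw [hxs n]; module
      have h1 : ‖xs (n + 1) - Jr (lam n) (xs n)‖
          ≤ a n * ‖f (xs n) - Jr (lam n) (xs n)‖ + ‖e n‖ := by
        rw [heq]
        refine (norm_add_le _ _).trans ?_
        rw [norm_smul, Real.norm_eq_abs, abs_of_nonneg (ha n).1]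
      have h2 : ‖f (xs n) - Jr (lam n) (xs n)‖ ≤ (α * u n + c) + u n := by
        calc ‖f (xs n) - Jr (lam n) (xs n)‖
            ≤ ‖f (xs n) - z‖ + ‖Jr (lam n) (xs n) - z‖ := by
              have := norm_sub_le_norm_sub_add_norm_sub (f (xs n)) z (Jr (lam n) (xs n))
              rw [norm_sub_rev (z) (Jr (lam n) (xs n))] at this
              linarith
        _ ≤ (α * u n + c) + u n := add_le_add (hfz n) (quasi (lam n) (hlam n) (xs n))
      have h3 : ‖xs n - Jr (lam n) (xs n)‖
          ≤ d n + ‖xs (n + 1) - Jr (lam n) (xs n)‖ := by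
        have := norm_sub_le_norm_sub_add_norm_sub (xs n) (xs (n + 1)) (Jr (lam n) (xs n))
        simpa [hd] using this
      have han0 : 0 ≤ a n := (ha n).1
      nlinarith [h1, h2, h3]
    have hrhs2 : Filter.Tendsto (fun n => d n + ((1 + α) * (a n * u n) + c * a n) + ‖e n‖)
        Filter.atTop (nhds 0) := by
      have : Filter.Tendsto (fun n => d n + ((1 + α) * (a n * u n) + c * a n) + ‖e n‖)
          Filter.atTop (nhds (0 + ((1 + α) * 0 + c * 0) + 0)) :=
        (hasreg.add ((hau.const_mul (1 + α)).add (ha0.const_mul c))).add he0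
      simpa using this
    exact squeeze_zero (fun n => norm_nonneg _) hmain hrhs2
  refine ⟨part1, ?_⟩
  intro ha0 hinf m
  have hp1 := part1 ha0
  set ℓ := ⨅ n, lam n with hℓ
  have hbdd : BddBelow (Set.range lam) := ⟨0, by rintro _ ⟨n, rfl⟩; exact (hlam n).le⟩
  have hle : ∀ n, ℓ ≤ lam n := fun n => ciInf_le hbdd n
  -- resolvent inequality
  have res : ∀ γ μ : ℝ, 0 < γ → 0 < μ → ∀ y : X,
      ‖Jr γ y - Jr μ y‖ ≤ |1 - γ / μ| * ‖y - Jr μ y‖ := by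
    intro γ μ hγ hμ y
    have h := hA (Jr γ y) (Jr μ y) (γ⁻¹ • (y - Jr γ y)) (μ⁻¹ • (y - Jr μ y))
      (hJ γ hγ y) (hJ μ hμ y) γ hγ
    have heq : Jr γ y - Jr μ y + γ • (γ⁻¹ • (y - Jr γ y) - μ⁻¹ • (y - Jr μ y))
        = (1 - γ / μ) • (y - Jr μ y) := by
      rw [smul_sub, smul_smul, smul_smul, mul_inv_cancel₀ hγ.ne', one_smul,
        sub_smul, one_smul, div_eq_mul_inv]
      abel
    rw [heq, norm_smul, Real.norm_eq_abs] at h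
    exact h
  have hconst : ∀ n, ‖xs n - Jr (lam m) (xs n)‖
      ≤ (2 + lam m / ℓ) * ‖xs n - Jr (lam n) (xs n)‖ := by
    intro n
    have h1 : ‖xs n - Jr (lam m) (xs n)‖
        ≤ ‖xs n - Jr (lam n) (xs n)‖ + ‖Jr (lam m) (xs n) - Jr (lam n) (xs n)‖ := by
      have := norm_sub_le_norm_sub_add_norm_sub (xs n) (Jr (lam n) (xs n)) (Jr (lam m) (xs n))
      rw [norm_sub_rev (Jr (lam n) (xs n)) (Jr (lam m) (xs n))] at this
      linarith
    have h2 := res (lam m) (lam n) (hlam m) (hlam n) (xs n)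
    have h3 : |1 - lam m / lam n| ≤ 1 + lam m / ℓ := by
      have ht : 0 ≤ lam m / lam n := div_nonneg (hlam m).le (hlam n).le
      have ht2 : lam m / lam n ≤ lam m / ℓ :=
        div_le_div_of_nonneg_left (hlam m).le hinf (hle n)
      calc |1 - lam m / lam n| ≤ |1| + |lam m / lam n| := abs_sub _ _
      _ = 1 + lam m / lam n := by rw [abs_one, abs_of_nonneg ht]
      _ ≤ 1 + lam m / ℓ := by linarith
    have hnn : 0 ≤ ‖xs n - Jr (lam n) (xs n)‖ := norm_nonneg _
    nlinarith [h1, h2, h3, hnn, abs_nonneg (1 - lam m / lam n)]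
  have hrhs : Filter.Tendsto (fun n => (2 + lam m / ℓ) * ‖xs n - Jr (lam n) (xs n)‖)
      Filter.atTop (nhds 0) := by
    have := hp1.const_mul (2 + lam m / ℓ)
    simpa using this
  exact squeeze_zero (fun n => norm_nonneg _) hconst hrhs
end
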